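/- arXiv:quant-ph/0507108 — 7 statements merged into one kernel-verified Lean document; each statement's English description precedes it below -/
import Mathlib

section
/- Let (X, 𝔄) and (Y, 𝔅) be test spaces and let ω be a state on the Cartesian product test space (X × Y, 𝔄 × 𝔅). Then the following are equivalent: (a) ω is a state on (X × Y, 𝔄𝔅), i.e. ω sums to 1 over every test in →𝔄𝔅 ∪ ←𝔄𝔅; (b) ω is influence-free. -/
/-- A test space: a collection of nonempty finite subsets (tests) covering `X`. -/
structure TestSpace (X : Type*) where
  tests : Set (Finset X)
  nonempty_of_mem : ∀ E ∈ tests, E.Nonempty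
  covers : ∀ x : X, ∃ E ∈ tests, x ∈ E

private lemma eq_at_of_sum_eq {α : Type*} {s : Finset α} {a : α} (ha : a ∈ s)
    {f g : α → ℝ} (h : ∀ b ∈ s, b ≠ a → f b = g b)
    (hsum : ∑ b ∈ s, f b = ∑ b ∈ s, g b) : f a = g a := by
  classical
  rw [← Finset.sum_erase_add s f ha, ← Finset.sum_erase_add s g ha] at hsum
  have : ∑ b ∈ s.erase a, f b = ∑ b ∈ s.erase a, g b :=
    Finset.sum_congr rfl fun b hb => h b (Finset.mem_of_mem_erase hb) (Finset.ne_of_mem_erase hb)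
  linarith

/-- A state on the Cartesian product test space is a state on the Foulis–Randall
(bilateral) product test space `𝔄𝔅 = →𝔄𝔅 ∪ ←𝔄𝔅` iff it is influence-free. -/
theorem bilateral_product_state_iff_influence_free
    {X Y : Type*} (𝔄 : TestSpace X) (𝔅 : TestSpace Y) (ω : X × Y → ℝ)
    (hpos : ∀ p : X × Y, 0 ≤ ω p)
    (hcart : ∀ E ∈ 𝔄.tests, ∀ F ∈ 𝔅.tests, ∑ p ∈ E ×ˢ F, ω p = 1) :
    ((∀ E ∈ 𝔄.tests, ∀ F : X → Finset Y, (∀ x ∈ E, F x ∈ 𝔅.tests) →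
        ∑ x ∈ E, ∑ y ∈ F x, ω (x, y) = 1) ∧
     (∀ F ∈ 𝔅.tests, ∀ E : Y → Finset X, (∀ y ∈ F, E y ∈ 𝔄.tests) →
        ∑ y ∈ F, ∑ x ∈ E y, ω (x, y) = 1))
      ↔
    ((∀ y : Y, ∀ E ∈ 𝔄.tests, ∀ E' ∈ 𝔄.tests,
        ∑ x ∈ E, ω (x, y) = ∑ x ∈ E', ω (x, y)) ∧
     (∀ x : X, ∀ F ∈ 𝔅.tests, ∀ F' ∈ 𝔅.tests,
        ∑ y ∈ F, ω (x, y) = ∑ y ∈ F', ω (x, y))) := by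
  classical
  constructor
  · rintro ⟨hfw, hbw⟩
    constructor
    · intro y E hE E' hE'
      obtain ⟨F, hF, hyF⟩ := 𝔅.covers y
      have h1 := hbw F hF (fun z => if z = y then E else E')
        (fun z _ => by by_cases hz : z = y <;> simp [hz, hE, hE'])
      have h2 := hbw F hF (fun _ => E') (fun _ _ => hE')
      have := eq_at_of_sum_eq hyF
        (f := fun z => ∑ x ∈ (if z = y then E else E'), ω (x, z))
        (g := fun z => ∑ x ∈ E', ω (x, z))
        (fun b _ hb => by simp [hb]) (h1.trans h2.symm)
      simpa using this
    · intro x F hF F' hF'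
      obtain ⟨E, hE, hxE⟩ := 𝔄.covers x
      have h1 := hfw E hE (fun z => if z = x then F else F')
        (fun z _ => by by_cases hz : z = x <;> simp [hz, hF, hF'])
      have h2 := hfw E hE (fun _ => F') (fun _ _ => hF')
      have := eq_at_of_sum_eq hxE
        (f := fun z => ∑ y ∈ (if z = x then F else F'), ω (z, y))
        (g := fun z => ∑ y ∈ F', ω (z, y))
        (fun b _ hb => by simp [hb]) (h1.trans h2.symm)
      simpa using this
  · rintro ⟨hif1, hif2⟩
    constructor
    · intro E hE F hFmem
      obtain ⟨x₀, hx₀⟩ := 𝔄.nonempty_of_mem E hE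
      have hF₀ := hFmem x₀ hx₀
      have : ∑ x ∈ E, ∑ y ∈ F x, ω (x, y) = ∑ x ∈ E, ∑ y ∈ F x₀, ω (x, y) :=
        Finset.sum_congr rfl fun x hx => hif2 x (F x) (hFmem x hx) (F x₀) hF₀
      rw [this, ← Finset.sum_product]
      exact hcart E hE (F x₀) hF₀
    · intro F hF E hEmem
      obtain ⟨y₀, hy₀⟩ := 𝔅.nonempty_of_mem F hF
      have hE₀ := hEmem y₀ hy₀
      have : ∑ y ∈ F, ∑ x ∈ E y, ω (x, y) = ∑ y ∈ F, ∑ x ∈ E y₀, ω (x, y) :=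
        Finset.sum_congr rfl fun y hy => hif1 y (E y) (hEmem y hy) (E y₀) hE₀
      rw [this, Finset.sum_comm, ← Finset.sum_product]
      exact hcart (E y₀) hE₀ F hF
end

section
/- (Operational Bayes Theorem.) Let (X, 𝔄) and (Y, 𝔅) be test spaces with 𝔄 and 𝔅 nonempty, and let ω be an influence-free state on the Cartesian product test space (X × Y, 𝔄 × 𝔅). Fix E₀ ∈ 𝔄 and F₀ ∈ 𝔅 and define the marginals ω_A x := ∑_{y ∈ F₀} ω (x, y) and ω_B y := ∑_{x ∈ E₀} ω (x, y) (by influence-freedom these values do not depend on the choice of E₀, F₀). Let a ∈ X, b ∈ Y and F ∈ 𝔅, and assume ω_A a > 0 and ω_B c > 0 for every c ∈ F. Define the conditional states ω_a y := ω (a, y) / ω_A a and ω_c x := ω (x, c) / ω_B c. Then ω_a b = (ω_B b * ω_b a) / (∑_{c ∈ F} ω_B c * ω_c a). -/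
/-- Operational Bayes Theorem (Foulis–Randall): for an influence-free state `ω` on the
Cartesian product test space, with marginals `ω_A x = ∑ y ∈ F₀, ω (x, y)` and
`ω_B y = ∑ x ∈ E₀, ω (x, y)` and conditional states `ω_a y = ω (a, y) / ω_A a`,
`ω_c x = ω (x, c) / ω_B c`, one has
`ω_a b = (ω_B b * ω_b a) / (∑ c ∈ F, ω_B c * ω_c a)`. -/
theorem operational_bayes
    {X Y : Type*} (𝔄 : TestSpace X) (𝔅 : TestSpace Y) (ω : X × Y → ℝ)
    (h𝔄 : 𝔄.tests.Nonempty) (h𝔅 : 𝔅.tests.Nonempty)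
    (hpos : ∀ p : X × Y, 0 ≤ ω p)
    (hcart : ∀ E ∈ 𝔄.tests, ∀ F ∈ 𝔅.tests, ∑ p ∈ E ×ˢ F, ω p = 1)
    (hleft : ∀ y : Y, ∀ E ∈ 𝔄.tests, ∀ E' ∈ 𝔄.tests,
        ∑ x ∈ E, ω (x, y) = ∑ x ∈ E', ω (x, y))
    (hright : ∀ x : X, ∀ F ∈ 𝔅.tests, ∀ F' ∈ 𝔅.tests,
        ∑ y ∈ F, ω (x, y) = ∑ y ∈ F', ω (x, y))
    (E₀ : Finset X) (hE₀ : E₀ ∈ 𝔄.tests) (F₀ : Finset Y) (hF₀ : F₀ ∈ 𝔅.tests)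
    (a : X) (b : Y) (F : Finset Y) (hF : F ∈ 𝔅.tests)
    (ha : 0 < ∑ y ∈ F₀, ω (a, y))
    (hc : ∀ c ∈ F, 0 < ∑ x ∈ E₀, ω (x, c)) :
    ω (a, b) / (∑ y ∈ F₀, ω (a, y)) =
      ((∑ x ∈ E₀, ω (x, b)) * (ω (a, b) / (∑ x ∈ E₀, ω (x, b)))) /
        (∑ c ∈ F, (∑ x ∈ E₀, ω (x, c)) * (ω (a, c) / (∑ x ∈ E₀, ω (x, c)))) := by
  have hden : ∑ c ∈ F, (∑ x ∈ E₀, ω (x, c)) * (ω (a, c) / (∑ x ∈ E₀, ω (x, c)))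
      = ∑ y ∈ F₀, ω (a, y) := by
    rw [← hright a F hF F₀ hF₀]
    exact Finset.sum_congr rfl fun c hcF => mul_div_cancel₀ _ (hc c hcF).ne'
  rw [hden]
  congr 1
  by_cases hb : (∑ x ∈ E₀, ω (x, b)) = 0
  · have hab : ω (a, b) = 0 := by
      obtain ⟨E, hE, haE⟩ := 𝔄.covers a
      have hsum : ∑ x ∈ E, ω (x, b) = 0 := (hleft b E hE E₀ hE₀).trans hb
      have := Finset.sum_eq_zero_iff_of_nonneg (fun x _ => hpos (x, b)) |>.mp hsum a haE
      exact this
    simp [hab, hb]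
  · rw [mul_div_cancel₀ _ hb]
end

section
/- For every linear map Φ : Matrix (Fin n) (Fin n) ℂ →ₗ[ℂ] Matrix (Fin n) (Fin n) ℂ there exists a unique matrix W : Matrix (Fin n × Fin n) (Fin n × Fin n) ℂ such that for all vectors x y : Fin n → ℂ, star y ⬝ᵥ (Φ (Matrix.vecMulVec x (star x))).mulVec y = star (x ⊗ y) ⬝ᵥ W.mulVec (x ⊗ y). Conversely (by uniqueness) every W : Matrix (Fin n × Fin n) (Fin n × Fin n) ℂ arises in this way from at most one linear map Φ. -/
/-!
Both sides are quadratic forms in `x` whose coefficients are quadratic forms in `y`: writing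
`|x⟩⟨x| = ∑ x_k x̄_i E_ki`, the left side is `∑ x̄_i x_k ⟨y, Φ(E_ki) y⟩`, and the right side is
`∑ x̄_i x_k ⟨y, W_ik y⟩` with `W_ik` the `(i, k)` block of `W`. So `W_ik` with entries
`Φ(E_ki)_jl` works, and by polarization (a complex quadratic form determines its matrix),
applied first in `x` and then in `y`, it is the only choice. Since the entries of this `W` are
those of the `Φ(E_ki)`, `Φ` is recovered from `W`.
-/

open Matrix

/-- The pure tensor of two vectors: `(x ⊗ y) (i, j) = x i * y j`. -/
def tensVec {n : ℕ} (x y : Fin n → ℂ) : Fin n × Fin n → ℂ := fun p => x p.1 * y p.2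

variable {m n R : Type*}

namespace Matrix

theorem eq_of_forall_star_dotProduct_mulVec_eq [Fintype m] [DecidableEq m] {M N : Matrix m m ℂ}
    (h : ∀ x, star x ⬝ᵥ M *ᵥ x = star x ⬝ᵥ N *ᵥ x) : M = N := by
  refine toEuclideanLin.injective <| (ext_inner_map _ _).mp fun x => ?_
  have inner_eq (A : Matrix m m ℂ) :
      inner ℂ (toEuclideanLin A x) x = star (star x.ofLp ⬝ᵥ A *ᵥ x.ofLp) := by
    rw [EuclideanSpace.inner_eq_star_dotProduct, ← star_dotProduct_star, star_star,
      dotProduct_comm]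
    rfl
  rw [inner_eq, inner_eq, h]

theorem vecMulVec_eq_sum_smul_single [Fintype m] [DecidableEq m] [Semiring R] (x y : m → R) :
    vecMulVec x y = ∑ i, ∑ k, (x k * y i) • single k i 1 := by
  rw [matrix_eq_sum_single (vecMulVec x y), Finset.sum_comm]
  simp only [vecMulVec_apply, smul_single, smul_eq_mul, mul_one]

def partialQuadForm [Fintype n] [NonUnitalNonAssocSemiring R] [Star R]
    (W : Matrix (m × n) (m × n) R) (y : n → R) : Matrix m m R :=
  of fun i k => star y ⬝ᵥ (of fun j l => W (i, j) (k, l)) *ᵥ y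

end Matrix

namespace LinearMap

/-- `∑ i k, E_ik ⊗ Φ(E_ki)`: the Choi matrix of `Φ` with its first tensor factor transposed. -/
def choiPartialTranspose [DecidableEq m] [CommSemiring R] (Φ : Matrix m m R →ₗ[R] Matrix m m R) :
    Matrix (m × m) (m × m) R :=
  of fun p q => Φ (Matrix.single q.1 p.1 1) p.2 q.2

theorem choiPartialTranspose_injective [Fintype m] [DecidableEq m] [CommSemiring R] :
    Function.Injective (choiPartialTranspose : (Matrix m m R →ₗ[R] Matrix m m R) → _) :=
  fun _ _ h => ext_linearMap R fun k i => LinearMap.ext_ring <|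
    Matrix.ext fun a b => congrFun (congrFun h (i, a)) (k, b)

end LinearMap

theorem star_tensVec_dotProduct_mulVec {n : ℕ} (W : Matrix (Fin n × Fin n) (Fin n × Fin n) ℂ)
    (x y : Fin n → ℂ) :
    star (tensVec x y) ⬝ᵥ W *ᵥ tensVec x y = star x ⬝ᵥ partialQuadForm W y *ᵥ x := by
  simp only [dotProduct, mulVec, tensVec, partialQuadForm, of_apply, Pi.star_apply, star_mul',
    Fintype.sum_prod_type, Finset.mul_sum, Finset.sum_mul]
  refine Fintype.sum_congr _ _ fun i => ?_
  rw [Finset.sum_comm]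
  refine Fintype.sum_congr _ _ fun k => Fintype.sum_congr _ _ fun j =>
    Fintype.sum_congr _ _ fun l => ?_
  ring

theorem eq_of_forall_star_tensVec_dotProduct_mulVec_eq {n : ℕ}
    {W₁ W₂ : Matrix (Fin n × Fin n) (Fin n × Fin n) ℂ}
    (h : ∀ x y, star (tensVec x y) ⬝ᵥ W₁ *ᵥ tensVec x y
      = star (tensVec x y) ⬝ᵥ W₂ *ᵥ tensVec x y) : W₁ = W₂ := by
  have partialQuadForm_eq (y : Fin n → ℂ) : partialQuadForm W₁ y = partialQuadForm W₂ y :=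
    eq_of_forall_star_dotProduct_mulVec_eq fun x => by
      rw [← star_tensVec_dotProduct_mulVec, ← star_tensVec_dotProduct_mulVec, h]
  have block_eq (i k : Fin n) :
      (of fun j l => W₁ (i, j) (k, l)) = (of fun j l => W₂ (i, j) (k, l)) :=
    eq_of_forall_star_dotProduct_mulVec_eq fun y =>
      congrFun (congrFun (partialQuadForm_eq y) i) k
  ext ⟨i, j⟩ ⟨k, l⟩
  exact congrFun (congrFun (block_eq i k) j) l

theorem star_dotProduct_mulVec_vecMulVec_star {n : ℕ}
    (Φ : Matrix (Fin n) (Fin n) ℂ →ₗ[ℂ] Matrix (Fin n) (Fin n) ℂ) (x y : Fin n → ℂ) :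
    star y ⬝ᵥ Φ (vecMulVec x (star x)) *ᵥ y
      = star (tensVec x y) ⬝ᵥ Φ.choiPartialTranspose *ᵥ tensVec x y := by
  rw [star_tensVec_dotProduct_mulVec, vecMulVec_eq_sum_smul_single]
  simp only [map_sum, map_smul, sum_mulVec, dotProduct_sum, smul_mulVec, dotProduct_smul,
    smul_eq_mul]
  have entry (i k : Fin n) :
      partialQuadForm Φ.choiPartialTranspose y i k = star y ⬝ᵥ Φ (single k i 1) *ᵥ y :=
    rfl
  conv_rhs => simp only [dotProduct, mulVec, Finset.mul_sum]
  refine Fintype.sum_congr _ _ fun i => Fintype.sum_congr _ _ fun k => ?_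
  rw [entry, Pi.star_apply]
  ring

/-- For every linear map `Φ` on `n × n` complex matrices there is a unique matrix `W` on the
tensor product such that `⟨y, Φ(|x⟩⟨x|) y⟩ = ⟨x ⊗ y, W (x ⊗ y)⟩` for all vectors `x, y`;
conversely every `W` arises from at most one such `Φ`. -/
theorem operator_representation_of_linear_maps (n : ℕ) :
    (∀ Φ : Matrix (Fin n) (Fin n) ℂ →ₗ[ℂ] Matrix (Fin n) (Fin n) ℂ,
      ∃! W : Matrix (Fin n × Fin n) (Fin n × Fin n) ℂ,
        ∀ x y : Fin n → ℂ,
          star y ⬝ᵥ (Φ (Matrix.vecMulVec x (star x))).mulVec y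
            = star (tensVec x y) ⬝ᵥ W.mulVec (tensVec x y)) ∧
    (∀ W : Matrix (Fin n × Fin n) (Fin n × Fin n) ℂ,
      ∀ Φ₁ Φ₂ : Matrix (Fin n) (Fin n) ℂ →ₗ[ℂ] Matrix (Fin n) (Fin n) ℂ,
        (∀ x y : Fin n → ℂ,
          star y ⬝ᵥ (Φ₁ (Matrix.vecMulVec x (star x))).mulVec y
            = star (tensVec x y) ⬝ᵥ W.mulVec (tensVec x y)) →
        (∀ x y : Fin n → ℂ,
          star y ⬝ᵥ (Φ₂ (Matrix.vecMulVec x (star x))).mulVec y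
            = star (tensVec x y) ⬝ᵥ W.mulVec (tensVec x y)) →
        Φ₁ = Φ₂) := by
  have represents_iff (Φ : Matrix (Fin n) (Fin n) ℂ →ₗ[ℂ] Matrix (Fin n) (Fin n) ℂ)
      (W : Matrix (Fin n × Fin n) (Fin n × Fin n) ℂ) :
      (∀ x y : Fin n → ℂ, star y ⬝ᵥ Φ (vecMulVec x (star x)) *ᵥ y
        = star (tensVec x y) ⬝ᵥ W *ᵥ tensVec x y) ↔ W = Φ.choiPartialTranspose := by
    simp only [star_dotProduct_mulVec_vecMulVec_star]
    exact ⟨fun h => eq_of_forall_star_tensVec_dotProduct_mulVec_eq fun x y => (h x y).symm,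
      fun h _ _ => h ▸ rfl⟩
  refine ⟨fun Φ => ⟨Φ.choiPartialTranspose, (represents_iff Φ _).mpr rfl,
    fun W hW => (represents_iff Φ W).mp hW⟩, fun W Φ₁ Φ₂ h₁ h₂ => ?_⟩
  exact LinearMap.choiPartialTranspose_injective <|
    ((represents_iff Φ₁ W).mp h₁).symm.trans ((represents_iff Φ₂ W).mp h₂)
end

section
/- Let n : ℕ and let S : Matrix (Fin n × Fin n) (Fin n × Fin n) ℂ be the swap operator, S ((i, j), (k, l)) = if i = l ∧ j = k then 1 else 0. Then: (a) S is positive on pure tensors; indeed for all x y : Fin n → ℂ, star (x ⊗ y) ⬝ᵥ S.mulVec (x ⊗ y) = ‖∑_i star (x i) * y i‖², a nonnegative real; (b) if n ≥ 2, S is not positive semidefinite. -/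
/-!
The swap operator exchanges the factors of a pure tensor, `S (x ⊗ y) = y ⊗ x`, so
`⟨x ⊗ y, S (x ⊗ y)⟩ = ⟨x, y⟩ ⟨y, x⟩ = |⟨x, y⟩|² ≥ 0`. On the other hand the antisymmetric tensor
`eᵢ ⊗ eⱼ - eⱼ ⊗ eᵢ` (with `i ≠ j`, which needs `n ≥ 2`) is an eigenvector of `S` with eigenvalue `-1`.
-/

open Matrix ComplexOrder

/-- The swap operator `S ((i,j),(k,l)) = δ_{il} δ_{jk}`. -/
def swapOp (n : ℕ) : Matrix (Fin n × Fin n) (Fin n × Fin n) ℂ :=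
  Matrix.of fun p q => if p.1 = q.2 ∧ p.2 = q.1 then 1 else 0

theorem Matrix.not_posSemidef_of_mulVec_eq_neg {ι R : Type*} [Fintype ι] [Ring R]
    [PartialOrder R] [StarRing R] [StarOrderedRing R] [NoZeroDivisors R]
    {M : Matrix ι ι R} {v : ι → R} (hv : v ≠ 0) (hMv : M *ᵥ v = -v) :
    ¬ M.PosSemidef := fun hM => by
  have h := hM.dotProduct_mulVec_nonneg v
  rw [hMv, dotProduct_neg, neg_nonneg] at h
  exact (dotProduct_star_self_pos_iff.2 hv).not_ge h

lemma star_tensVec_dotProduct_tensVec {n : ℕ} (x y u v : Fin n → ℂ) :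
    star (tensVec x y) ⬝ᵥ tensVec u v = (star x ⬝ᵥ u) * (star y ⬝ᵥ v) := by
  simp only [dotProduct, tensVec, Fintype.sum_prod_type, Finset.sum_mul_sum, Pi.star_apply,
    star_mul']
  exact Finset.sum_congr rfl fun i _ => Finset.sum_congr rfl fun j _ => by ring

lemma tensVec_single_sub_ne_zero {n : ℕ} {i j : Fin n} (hij : i ≠ j) :
    tensVec (Pi.single i 1) (Pi.single j 1) - tensVec (Pi.single j 1) (Pi.single i 1) ≠ 0 := by
  intro h
  simpa [tensVec, hij] using congr_fun h (i, j)

lemma swapOp_mulVec {n : ℕ} (v : Fin n × Fin n → ℂ) : swapOp n *ᵥ v = v ∘ Prod.swap := by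
  ext ⟨i, j⟩
  simp [swapOp, mulVec, dotProduct, Fintype.sum_prod_type, ite_and]

lemma swapOp_mulVec_tensVec {n : ℕ} (x y : Fin n → ℂ) :
    swapOp n *ᵥ tensVec x y = tensVec y x := by
  ext p
  simp [swapOp_mulVec, tensVec, mul_comm]

/-- The swap operator is positive on pure tensors (with value `|⟨x, y⟩|²`),
but for `n ≥ 2` it is not positive semidefinite. -/
theorem swap_POPT_not_posSemidef (n : ℕ) :
    (∀ x y : Fin n → ℂ,
      star (tensVec x y) ⬝ᵥ (swapOp n).mulVec (tensVec x y)
        = ((‖∑ i, star (x i) * y i‖ ^ 2 : ℝ) : ℂ)) ∧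
    (2 ≤ n → ¬ (swapOp n).PosSemidef) := by
  refine ⟨fun x y => ?_, fun hn => ?_⟩
  · rw [swapOp_mulVec_tensVec, star_tensVec_dotProduct_tensVec, star_dotProduct y x,
      Complex.star_def, Complex.mul_conj']
    push_cast
    rfl
  · have hij : (⟨0, by omega⟩ : Fin n) ≠ ⟨1, by omega⟩ := by simp
    refine not_posSemidef_of_mulVec_eq_neg (tensVec_single_sub_ne_zero hij) ?_
    rw [mulVec_sub, swapOp_mulVec_tensVec, swapOp_mulVec_tensVec, neg_sub]
end

section
/- (Choi–Hellwig–Kraus theorem.) Let Φ : Matrix (Fin n) (Fin n) ℂ →ₗ[ℂ] Matrix (Fin n) (Fin n) ℂ be a linear map. Then the Choi matrix Ch Φ is positive semidefinite if and only if Φ is completely positive. -/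
/-!
Writing `C` for the Choi matrix, linearity gives `Φ X i j = ∑ a b, X a b * C (a, i) (b, j)`, so
`(id ⊗ Φ) A` is the compression `Vᴴ (A ⊗ C) V` of a Kronecker product, where `V` inserts the
maximally entangled vector `ω = ∑ i, eᵢ ⊗ eᵢ` between the two tensor factors. Hence `C ≥ 0`
makes `id ⊗ Φ` positive. Conversely `C = (id ⊗ Φ) (ω ωᴴ)`.
-/

open Matrix ComplexOrder

/-- `Φ` is completely positive: every blockwise application of `Φ` to a positive semidefinite
matrix on `ℂ^m ⊗ ℂ^n` yields a positive semidefinite matrix. -/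
def IsCP (n : ℕ) (Φ : Matrix (Fin n) (Fin n) ℂ →ₗ[ℂ] Matrix (Fin n) (Fin n) ℂ) : Prop :=
  ∀ (m : ℕ) (A : Matrix (Fin m × Fin n) (Fin m × Fin n) ℂ), A.PosSemidef →
    (Matrix.of fun p q : Fin m × Fin n =>
      Φ (Matrix.of fun i' j' => A (p.1, i') (q.1, j')) p.2 q.2).PosSemidef

/-- The Choi matrix of `Φ`: `Ch Φ ((i, j), (k, l)) = Φ (E i k) j l`. -/
def Ch (n : ℕ) (Φ : Matrix (Fin n) (Fin n) ℂ →ₗ[ℂ] Matrix (Fin n) (Fin n) ℂ) :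
    Matrix (Fin n × Fin n) (Fin n × Fin n) ℂ :=
  Matrix.of fun p q => Φ (Matrix.single p.1 q.1 1) p.2 q.2

open scoped Kronecker

namespace Matrix

variable {𝕜 σ ι κ : Type*} [CommSemiring 𝕜] [DecidableEq ι]

def choiMatrix (Φ : Matrix ι ι 𝕜 →ₗ[𝕜] Matrix κ κ 𝕜) : Matrix (ι × κ) (ι × κ) 𝕜 :=
  of fun p q => Φ (single p.1 q.1 1) p.2 q.2

/-- `id ⊗ Φ` applied to a block matrix with blocks indexed by `σ`. -/
def blockMap (Φ : Matrix ι ι 𝕜 →ₗ[𝕜] Matrix κ κ 𝕜) (A : Matrix (σ × ι) (σ × ι) 𝕜) :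
    Matrix (σ × κ) (σ × κ) 𝕜 :=
  of fun p q => Φ (of fun a b => A (p.1, a) (q.1, b)) p.2 q.2

def maxEntangled (ι 𝕜 : Type*) [DecidableEq ι] [Zero 𝕜] [One 𝕜] : ι × ι → 𝕜 :=
  fun p => if p.1 = p.2 then 1 else 0

/-- The matrix of `eₛ ⊗ eₖ ↦ eₛ ⊗ (∑ i, eᵢ ⊗ eᵢ) ⊗ eₖ`. -/
def maxEntangledEmbedding (σ ι κ 𝕜 : Type*) [DecidableEq σ] [DecidableEq ι] [DecidableEq κ]
    [Zero 𝕜] [One 𝕜] : Matrix ((σ × ι) × (ι × κ)) (σ × κ) 𝕜 :=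
  of fun x y => if x.1.1 = y.1 ∧ x.2.2 = y.2 then maxEntangled ι 𝕜 (x.1.2, x.2.1) else 0

lemma blockMap_vecMulVec_maxEntangled [StarRing 𝕜] (Φ : Matrix ι ι 𝕜 →ₗ[𝕜] Matrix κ κ 𝕜) :
    blockMap Φ (vecMulVec (maxEntangled ι 𝕜) (star (maxEntangled ι 𝕜))) = choiMatrix Φ := by
  ext p q
  have hblock : (of fun a b => vecMulVec (maxEntangled ι 𝕜) (star (maxEntangled ι 𝕜))
      (p.1, a) (q.1, b)) = single p.1 q.1 1 := by
    ext a b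
    simp only [of_apply, vecMulVec_apply, maxEntangled, Pi.star_apply, apply_ite star, star_one,
      star_zero, mul_ite, mul_one, mul_zero, single_apply]
    split_ifs <;> simp_all
  rw [blockMap, of_apply, hblock, choiMatrix, of_apply]

variable [Fintype ι]

lemma linearMap_apply_eq_sum_choiMatrix (Φ : Matrix ι ι 𝕜 →ₗ[𝕜] Matrix κ κ 𝕜)
    (X : Matrix ι ι 𝕜) (i j : κ) :
    Φ X i j = ∑ a, ∑ b, X a b * choiMatrix Φ (a, i) (b, j) := by
  conv_lhs => rw [matrix_eq_sum_single X]
  simp only [map_sum, Matrix.sum_apply, choiMatrix, of_apply]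
  refine Finset.sum_congr rfl fun a _ => Finset.sum_congr rfl fun b _ => ?_
  rw [show single a b (X a b) = X a b • single a b 1 by rw [smul_single, smul_eq_mul, mul_one],
    map_smul, smul_apply, smul_eq_mul]

lemma blockMap_eq_conjTranspose_mul_kronecker_mul [StarRing 𝕜] [Fintype σ] [DecidableEq σ]
    [Fintype κ] [DecidableEq κ] (Φ : Matrix ι ι 𝕜 →ₗ[𝕜] Matrix κ κ 𝕜)
    (A : Matrix (σ × ι) (σ × ι) 𝕜) :
    blockMap Φ A = (maxEntangledEmbedding σ ι κ 𝕜)ᴴ * (A ⊗ₖ choiMatrix Φ) *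
      maxEntangledEmbedding σ ι κ 𝕜 := by
  ext p q
  simp only [blockMap, linearMap_apply_eq_sum_choiMatrix, mul_apply, maxEntangledEmbedding,
    maxEntangled, Fintype.sum_prod_type, kroneckerMap_apply, of_apply, conjTranspose_apply,
    ite_and, apply_ite star, star_one, star_zero, ite_mul, mul_ite, zero_mul, mul_zero, one_mul,
    mul_one, Finset.sum_ite_eq', Finset.sum_ite_eq, Finset.sum_ite_irrel, Finset.sum_const_zero,
    Finset.mem_univ, if_true]
  exact Finset.sum_comm

end Matrix

lemma Matrix.PosSemidef.blockMap {𝕜 σ ι κ : Type*} [RCLike 𝕜] [Fintype σ] [DecidableEq σ]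
    [Fintype ι] [DecidableEq ι] [Fintype κ] [DecidableEq κ]
    {Φ : Matrix ι ι 𝕜 →ₗ[𝕜] Matrix κ κ 𝕜} (hΦ : (choiMatrix Φ).PosSemidef)
    {A : Matrix (σ × ι) (σ × ι) 𝕜} (hA : A.PosSemidef) : (blockMap Φ A).PosSemidef := by
  rw [blockMap_eq_conjTranspose_mul_kronecker_mul]
  exact (hA.kronecker hΦ).conjTranspose_mul_mul_same _

/-- Choi–Hellwig–Kraus theorem: the Choi matrix of `Φ` is positive semidefinite iff `Φ` is
completely positive. -/
theorem choi_hellwig_kraus (n : ℕ)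
    (Φ : Matrix (Fin n) (Fin n) ℂ →ₗ[ℂ] Matrix (Fin n) (Fin n) ℂ) :
    (Ch n Φ).PosSemidef ↔ IsCP n Φ := by
  change (choiMatrix Φ).PosSemidef ↔ ∀ m (A : Matrix (Fin m × Fin n) _ ℂ), A.PosSemidef →
    (blockMap Φ A).PosSemidef
  refine ⟨fun hΦ _ _ hA => hΦ.blockMap hA, fun hCP => ?_⟩
  rw [← blockMap_vecMulVec_maxEntangled]
  exact hCP n _ (posSemidef_vecMulVec_self_star _)
end

section
/- Let Φ : Matrix (Fin n) (Fin n) ℂ →ₗ[ℂ] Matrix (Fin n) (Fin n) ℂ be a linear map whose Choi matrix is block-diagonal, i.e. Φ (E i k) = 0 whenever i ≠ k. Then Φ is completely positive if and only if Φ is co-completely positive. -/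
open Matrix ComplexOrder

/-- Transposition (in the standard basis) as a linear map on matrices. -/
def transpLM (n : ℕ) : Matrix (Fin n) (Fin n) ℂ →ₗ[ℂ] Matrix (Fin n) (Fin n) ℂ where
  toFun X := Xᵀ
  map_add' X Y := by simp
  map_smul' c X := by simp

/-- `Φ` is co-completely positive: `X ↦ Φ Xᵀ` is completely positive. -/
def IsCoCP (n : ℕ) (Φ : Matrix (Fin n) (Fin n) ℂ →ₗ[ℂ] Matrix (Fin n) (Fin n) ℂ) : Prop :=
  IsCP n (Φ ∘ₗ transpLM n)

/- A linear map that kills the off-diagonal matrix units only sees the diagonal of its argument,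
which transposition does not change. -/
theorem LinearMap.map_transpose_of_map_single_eq_zero {R m M : Type*} [Semiring R] [Finite m]
    [DecidableEq m] [AddCommMonoid M] [Module R M] (f : Matrix m m R →ₗ[R] M)
    (hf : ∀ i k, i ≠ k → f (Matrix.single i k 1) = 0) (X : Matrix m m R) : f Xᵀ = f X := by
  induction X using Matrix.induction_on' with
  | h_zero => simp
  | h_add X Y hX hY => rw [transpose_add, map_add, map_add, hX, hY]
  | h_std_basis i k x =>
    rw [transpose_single]
    rcases eq_or_ne i k with rfl | hik
    · rfl
    · have hsingle (a b : m) : Matrix.single a b x = x • Matrix.single a b (1 : R) := by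
        rw [smul_single, smul_eq_mul, mul_one]
      rw [hsingle, hsingle, map_smul, map_smul, hf i k hik, hf k i hik.symm]

/-- If the Choi matrix of `Φ` is block-diagonal (i.e. `Φ (E i k) = 0` for `i ≠ k`),
then `Φ` is completely positive iff it is co-completely positive. -/
theorem blockDiagonal_cp_iff_coCP (n : ℕ)
    (Φ : Matrix (Fin n) (Fin n) ℂ →ₗ[ℂ] Matrix (Fin n) (Fin n) ℂ)
    (hblock : ∀ i k : Fin n, i ≠ k → Φ (Matrix.single i k 1) = 0) :
    IsCP n Φ ↔ IsCoCP n Φ := by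
  have hΦ : Φ ∘ₗ transpLM n = Φ :=
    LinearMap.ext (Φ.map_transpose_of_map_single_eq_zero hblock)
  rw [IsCoCP, hΦ]
end

section
/- Fix n ≥ 1 and let W : Matrix (Fin n × Fin n) (Fin n × Fin n) ℂ with Matrix.trace W = 1. Suppose that W ⊗₁₂ T is positive on pure tensors with respect to the bipartition H_A ⊗ H_B, in the sense that for all positive semidefinite A, B : Matrix (Fin n × Fin n) (Fin n × Fin n) ℂ, the number Matrix.trace ((A ⊗_AB B) * (W ⊗₁₂ T)) is a nonnegative real (here A ⊗_AB B has entry A ((a₁, a₂), (c₁, c₂)) * B ((b₂, b₁), (d₂, d₁))). Then W is positive semidefinite. -/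
open Matrix ComplexOrder

/-- The normalized maximally entangled projection
`T ((i,j),(k,l)) = (1/n) δ_{ij} δ_{kl}`. -/
noncomputable def Tmat (n : ℕ) : Matrix (Fin n × Fin n) (Fin n × Fin n) ℂ :=
  Matrix.of fun p q =>
    (1 / n : ℂ) * (if p.1 = p.2 then 1 else 0) * (if q.1 = q.2 then 1 else 0)

/-- The coupling of `W` on the nonlocal subsystem `A₁B₁` with `V` on `A₂B₂`; the total system
is indexed by `((a₁, a₂), (b₂, b₁))`. -/
def tens12 (n : ℕ) (W V : Matrix (Fin n × Fin n) (Fin n × Fin n) ℂ) :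
    Matrix ((Fin n × Fin n) × (Fin n × Fin n)) ((Fin n × Fin n) × (Fin n × Fin n)) ℂ :=
  Matrix.of fun p q =>
    W ((p.1.1, p.2.2)) ((q.1.1, q.2.2)) * V ((p.1.2, p.2.1)) ((q.1.2, q.2.1))

/-- The coupling of `A` on the local subsystem `H_A = A₁A₂` with `B` on `H_B = B₂B₁`. -/
def tensAB (n : ℕ) (A B : Matrix (Fin n × Fin n) (Fin n × Fin n) ℂ) :
    Matrix ((Fin n × Fin n) × (Fin n × Fin n)) ((Fin n × Fin n) × (Fin n × Fin n)) ℂ :=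
  Matrix.of fun p q => A p.1 q.1 * B p.2 q.2

/-!
Test `W ⊗₁₂ T` against the product state `|x⟩⟨x| ⊗ |ω⟩⟨ω|`, where `ω = ∑ᵢ |i i⟩` is the
unnormalized maximally entangled vector on `B₂B₁`. The projection `T` on `A₂B₂` identifies `a₂`
with `b₂`, and `ω` identifies `b₂` with `b₁`; so the index `a₂` of `x` is carried over to the slot
`b₁` of `W`, and the trace collapses to `(1/n) ⟨x, W x⟩`. Hence every quadratic form of `W` is
nonnegative.
-/

theorem Matrix.posSemidef_of_forall_dotProduct_mulVec_nonneg {ι : Type*} [Fintype ι]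
    [DecidableEq ι] {M : Matrix ι ι ℂ} (h : ∀ x, 0 ≤ star x ⬝ᵥ M *ᵥ x) : M.PosSemidef := by
  rw [← isPositive_toEuclideanLin_iff, LinearMap.isPositive_iff_complex]
  intro x
  obtain ⟨r, hr, hr_eq⟩ := RCLike.nonneg_iff_exists_ofReal.mp (h x)
  rw [EuclideanSpace.inner_eq_star_dotProduct, ofLp_toLpLin, toLin'_apply, dotProduct_comm,
    star_dotProduct, ← hr_eq]
  simpa using hr

theorem Matrix.trace_vecMulVec_mul {ι R : Type*} [Fintype ι] [CommSemiring R] (u v : ι → R)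
    (M : Matrix ι ι R) : trace (vecMulVec u v * M) = v ⬝ᵥ M *ᵥ u := by
  rw [vecMulVec_mul, trace_vecMulVec, dotProduct_comm, dotProduct_mulVec]

def maxEntVec (n : ℕ) : Fin n × Fin n → ℂ := fun p => if p.1 = p.2 then 1 else 0

theorem star_maxEntVec (n : ℕ) : star (maxEntVec n) = maxEntVec n := by
  ext p
  simp [maxEntVec, apply_ite]

theorem tensAB_vecMulVec (n : ℕ) (x y u v : Fin n × Fin n → ℂ) :
    tensAB n (vecMulVec x u) (vecMulVec y v)
      = vecMulVec (fun p => x p.1 * y p.2) (fun p => u p.1 * v p.2) := by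
  ext p q
  simp only [tensAB, vecMulVec_apply, of_apply]
  ring

theorem dotProduct_tens12_Tmat_mulVec (n : ℕ) (W : Matrix (Fin n × Fin n) (Fin n × Fin n) ℂ)
    (x y : Fin n × Fin n → ℂ) :
    (fun p => y p.1 * maxEntVec n p.2) ⬝ᵥ
        tens12 n W (Tmat n) *ᵥ (fun p => x p.1 * maxEntVec n p.2)
      = (n : ℂ)⁻¹ * (y ⬝ᵥ W *ᵥ x) := by
  simp only [dotProduct, mulVec, tens12, Tmat, maxEntVec, of_apply, Fintype.sum_prod_type]
  simp only [mul_ite, ite_mul, mul_one, zero_mul, mul_zero, Finset.sum_ite_irrel,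
    Finset.sum_ite_eq, Finset.mem_univ, if_true, Finset.sum_const_zero, Finset.mul_sum]
  congr! 4 with a - b - c - d -
  ring

theorem popt_total_implies_posSemidef_general (n : ℕ) (hn : 1 ≤ n)
    (W : Matrix (Fin n × Fin n) (Fin n × Fin n) ℂ)
    (hPOPT : ∀ A B : Matrix (Fin n × Fin n) (Fin n × Fin n) ℂ,
      A.PosSemidef → B.PosSemidef →
        ∃ r : ℝ, 0 ≤ r ∧ Matrix.trace (tensAB n A B * tens12 n W (Tmat n)) = r) :
    W.PosSemidef := by
  refine posSemidef_of_forall_dotProduct_mulVec_nonneg fun x => ?_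
  obtain ⟨r, hr, htrace⟩ := hPOPT _ _ (posSemidef_vecMulVec_self_star x)
    (posSemidef_vecMulVec_self_star (maxEntVec n))
  rw [tensAB_vecMulVec, trace_vecMulVec_mul, star_maxEntVec, dotProduct_tens12_Tmat_mulVec]
    at htrace
  have hn0 : (n : ℂ) ≠ 0 := by exact_mod_cast Nat.one_le_iff_ne_zero.mp hn
  have hquad : star x ⬝ᵥ W *ᵥ x = ((n * r : ℝ) : ℂ) := by
    rw [Complex.ofReal_mul, ← htrace, Complex.ofReal_natCast, mul_inv_cancel_left₀ hn0]
  rw [hquad, Complex.zero_le_real]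
  positivity

/-- If the trace-one operator `W ⊗₁₂ T` is positive on pure tensors for the local bipartition
`H_A ⊗ H_B`, then `W` is positive semidefinite. -/
theorem popt_total_implies_posSemidef (n : ℕ) (hn : 1 ≤ n)
    (W : Matrix (Fin n × Fin n) (Fin n × Fin n) ℂ)
    (htr : Matrix.trace W = 1)
    (hPOPT : ∀ A B : Matrix (Fin n × Fin n) (Fin n × Fin n) ℂ,
      A.PosSemidef → B.PosSemidef →
        ∃ r : ℝ, 0 ≤ r ∧ Matrix.trace (tensAB n A B * tens12 n W (Tmat n)) = r) :
    W.PosSemidef :=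
  popt_total_implies_posSemidef_general n hn W hPOPT
end
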